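/- Let P ⊆ ℝ^d be a centrally symmetric polytope with nonempty interior, and let F₁ and F₂ be a strictly antipodal pair of faces of P whose distance ρ(F₁,F₂) equals the minimum width ω(P). Then both F₁ and F₂ have affine dimension d − 1, i.e., both are facets of P. -/

import Mathlib

/-!
The faces `F₁ = H(P,u) ∩ P` and `F₂ = H(P,-u) ∩ P` lie in parallel hyperplanes at distance
`w(P,u)`, so `ω(P) ≤ w(P,u) ≤ ρ(F₁,F₂) = ω(P)`: `u` is a direction of minimal width.
For `P` symmetric about `c`, `w(P,v) = 2 (h(P,v) - ⟨v,c⟩)`, and since `P` is a polytope,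
`h(P,v)` is still attained on `F₁` for all `v` near `u`. If `F₁` were not a facet, some `e ≠ 0`
would be orthogonal both to `u` and to `aff F₁`; for unit `v ∈ span {u, e}` near `u` this gives
`w(P,v) = 2 ⟨v, a - c⟩` with `a ∈ F₁` fixed, a linear functional on the unit circle, which
decreases strictly when `u` is tilted towards the side where `⟨e, a - c⟩ ≤ 0`.
-/

open Set Metric Pointwise

noncomputable section

variable {d : ℕ}

abbrev Euc (d : ℕ) := EuclideanSpace ℝ (Fin d)

/-- A polytope is the convex hull of finitely many points. -/
def IsPolytope (P : Set (Euc d)) : Prop :=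
  ∃ V : Finset (Euc d), P = convexHull ℝ (V : Set (Euc d))

/-- A convex body is a compact convex set with nonempty interior. -/
def IsConvexBody (K : Set (Euc d)) : Prop :=
  Convex ℝ K ∧ IsCompact K ∧ (interior K).Nonempty

/-- Support function. -/
def suppFn (K : Set (Euc d)) (u : Euc d) : ℝ :=
  sSup {r | ∃ x ∈ K, r = inner ℝ u x}

/-- Width in direction `u`. -/
def dirWidth (K : Set (Euc d)) (u : Euc d) : ℝ :=
  suppFn K u + suppFn K (-u)

/-- Minimum width. -/
def minWidth (K : Set (Euc d)) : ℝ :=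
  sInf {r | ∃ u : Euc d, ‖u‖ = 1 ∧ r = dirWidth K u}

/-- A convex body is reduced if every convex body properly contained in it has
strictly smaller minimum width. -/
def IsReducedBody (K : Set (Euc d)) : Prop :=
  IsConvexBody K ∧ ∀ K' : Set (Euc d), IsConvexBody K' → K' ⊂ K → minWidth K' < minWidth K

/-- The intersection of `P` with the supporting hyperplane with outer normal `u`. -/
def suppSet (P : Set (Euc d)) (u : Euc d) : Set (Euc d) :=
  P ∩ {x | (inner ℝ u x : ℝ) = suppFn P u}

/-- A (proper, nonempty) face of a polytope. -/
def IsFaceOf (P F : Set (Euc d)) : Prop :=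
  ∃ u : Euc d, ‖u‖ = 1 ∧ F = suppSet P u

/-- Affine dimension of a set. -/
def affDim (A : Set (Euc d)) : ℕ :=
  Module.finrank ℝ (affineSpan ℝ A).direction

def IsVertexOf (P : Set (Euc d)) (v : Euc d) : Prop :=
  IsFaceOf P {v}

def IsEdgeOf (P F : Set (Euc d)) : Prop :=
  IsFaceOf P F ∧ affDim F = 1

def IsFacetOf (P F : Set (Euc d)) : Prop :=
  IsFaceOf P F ∧ affDim F = d - 1

/-- Distinct faces `F₁`, `F₂` are strictly antipodal if there is a unit direction `u`
with `H(P,u) ∩ P = F₁` and `H(P,-u) ∩ P = F₂`. -/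
def StrictlyAntipodal (P F₁ F₂ : Set (Euc d)) : Prop :=
  F₁ ≠ F₂ ∧ ∃ u : Euc d, ‖u‖ = 1 ∧ suppSet P u = F₁ ∧ suppSet P (-u) = F₂

/-- Distance between the affine hulls of `A` and `B`. -/
def affDist (A B : Set (Euc d)) : ℝ :=
  sInf {r | ∃ x ∈ (affineSpan ℝ A : Set (Euc d)), ∃ y ∈ (affineSpan ℝ B : Set (Euc d)),
    r = dist x y}

open Filter Topology Module RealInnerProductSpace

section SupportFunction

variable {K : Set (Euc d)}

lemma inner_le_suppFn (hK : IsCompact K) {x : Euc d} (hx : x ∈ K) (u : Euc d) :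
    ⟪u, x⟫ ≤ suppFn K u := by
  have himage : {r | ∃ x ∈ K, r = ⟪u, x⟫} = (⟪u, ·⟫) '' K := by
    ext; simp [eq_comm]
  refine le_csSup ?_ ⟨x, hx, rfl⟩
  rw [himage]
  exact (hK.image (continuous_const.inner continuous_id)).bddAbove

lemma suppFn_le (hne : K.Nonempty) {u : Euc d} {b : ℝ} (h : ∀ x ∈ K, ⟪u, x⟫ ≤ b) :
    suppFn K u ≤ b := by
  obtain ⟨x, hx⟩ := hne
  exact csSup_le ⟨_, x, hx, rfl⟩ (by rintro _ ⟨y, hy, rfl⟩; exact h y hy)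

lemma IsCompact.suppSet_nonempty (hK : IsCompact K) (hne : K.Nonempty) (u : Euc d) :
    (suppSet K u).Nonempty := by
  obtain ⟨x, hx, hmax⟩ := hK.exists_isMaxOn hne (innerSL ℝ u).continuous.continuousOn
  exact ⟨x, hx, le_antisymm (inner_le_suppFn hK hx u) (suppFn_le hne fun y hy => hmax hy)⟩

lemma dirWidth_nonneg (hK : IsCompact K) (hne : K.Nonempty) (u : Euc d) : 0 ≤ dirWidth K u := by
  obtain ⟨x, hx⟩ := hne
  have h₁ := inner_le_suppFn hK hx u
  have h₂ := inner_le_suppFn hK hx (-u)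
  rw [inner_neg_left] at h₂
  rw [dirWidth]; linarith

lemma minWidth_le_dirWidth (hK : IsCompact K) (hne : K.Nonempty) {u : Euc d} (hu : ‖u‖ = 1) :
    minWidth K ≤ dirWidth K u :=
  csInf_le ⟨0, by rintro _ ⟨v, -, rfl⟩; exact dirWidth_nonneg hK hne v⟩ ⟨u, hu, rfl⟩

lemma dirWidth_pos (hK : IsCompact K) (hint : (interior K).Nonempty) {u : Euc d} (hu : ‖u‖ = 1) :
    0 < dirWidth K u := by
  obtain ⟨x, hx⟩ := hint
  obtain ⟨ε, hε, hball⟩ := Metric.isOpen_iff.1 isOpen_interior x hx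
  have hmem : ∀ t : ℝ, |t| < ε → x + t • u ∈ K := fun t ht =>
    interior_subset (hball (by simpa [norm_smul, hu] using ht))
  have hε₂ : |ε / 2| < ε := by rw [abs_of_pos (by positivity)]; linarith
  have h₁ := inner_le_suppFn hK (hmem _ hε₂) u
  have h₂ := inner_le_suppFn hK (hmem (-(ε / 2)) (by rwa [abs_neg])) (-u)
  simp only [inner_add_right, inner_neg_left, real_inner_smul_right, real_inner_self_eq_norm_sq,
    hu] at h₁ h₂
  rw [dirWidth]; linarith

lemma dirWidth_eq_of_symm (hK : IsCompact K) (hne : K.Nonempty) {c : Euc d}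
    (hc : ∀ x ∈ K, c + c - x ∈ K) (u : Euc d) :
    dirWidth K u = 2 * (suppFn K u - ⟪u, c⟫) := by
  have hrefl : ∀ x, ⟪u, c + c - x⟫ = 2 * ⟪u, c⟫ - ⟪u, x⟫ := fun x => by
    rw [inner_sub_right, inner_add_right]; ring
  have hneg : suppFn K (-u) = suppFn K u - 2 * ⟪u, c⟫ := by
    refine le_antisymm (suppFn_le hne fun x hx => ?_) ?_
    · have := inner_le_suppFn hK (hc x hx) u
      rw [hrefl] at this
      rw [inner_neg_left]; linarith
    · suffices suppFn K u ≤ suppFn K (-u) + 2 * ⟪u, c⟫ by linarith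
      refine suppFn_le hne fun x hx => ?_
      have := inner_le_suppFn hK (hc x hx) (-u)
      rw [inner_neg_left, hrefl] at this; linarith
  rw [dirWidth, hneg]; ring

end SupportFunction

lemma suppFn_convexHull_eq_inner {V : Finset (Euc d)} {u x : Euc d} (hx : x ∈ V)
    (hmax : ∀ y ∈ V, ⟪u, y⟫ ≤ ⟪u, x⟫) :
    suppFn (convexHull ℝ (V : Set (Euc d))) u = ⟪u, x⟫ :=
  le_antisymm
    (suppFn_le ⟨x, subset_convexHull ℝ _ hx⟩ fun _ hy =>
      convexHull_min hmax (convex_halfSpace_le (innerₗ (Euc d) u).isLinear _) hy)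
    (inner_le_suppFn (V.finite_toSet.isCompact_convexHull ℝ) (subset_convexHull ℝ _ hx) u)

lemma IsPolytope.eventually_suppSet_inter_nonempty {P : Set (Euc d)} (hP : IsPolytope P)
    (hne : P.Nonempty) (u : Euc d) :
    ∀ᶠ v in 𝓝 u, (suppSet P u ∩ suppSet P v).Nonempty := by
  obtain ⟨V, rfl⟩ := hP
  have hV : V.Nonempty := by
    rw [Finset.nonempty_iff_ne_empty]
    rintro rfl
    simp at hne
  obtain ⟨x₀, hx₀, hmax₀⟩ := V.exists_max_image (⟪u, ·⟫) hV
  have hcont : ∀ y : Euc d, Continuous (⟪·, y⟫) := fun y => continuous_id.inner continuous_const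
  have hnear : ∀ᶠ v in 𝓝 u, ∀ y ∈ V, ⟪u, y⟫ < ⟪u, x₀⟫ → ⟪v, y⟫ < ⟪v, x₀⟫ := by
    refine (eventually_all_finset V).2 fun y _ => ?_
    by_cases hy : ⟪u, y⟫ < ⟪u, x₀⟫
    · filter_upwards [(hcont y).continuousAt.eventually_lt (hcont x₀).continuousAt hy]
        with v hv using fun _ => hv
    · exact .of_forall fun _ hy' => absurd hy' hy
  filter_upwards [hnear] with v hv
  obtain ⟨x, hx, hmax⟩ := V.exists_max_image (⟪v, ·⟫) hV
  have hxu : ⟪u, x⟫ = ⟪u, x₀⟫ :=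
    le_antisymm (hmax₀ x hx) (not_lt.1 fun h => (hv x hx h).not_ge (hmax x₀ hx₀))
  have hxP : x ∈ convexHull ℝ (V : Set (Euc d)) := subset_convexHull ℝ _ hx
  exact ⟨x, ⟨hxP, (suppFn_convexHull_eq_inner hx₀ hmax₀).symm ▸ hxu⟩,
    hxP, (suppFn_convexHull_eq_inner hx hmax).symm⟩

lemma AffineSubspace.inner_eq_of_mem_orthogonal_direction {s : AffineSubspace ℝ (Euc d)}
    {v x y : Euc d} (hv : v ∈ s.directionᗮ) (hx : x ∈ s) (hy : y ∈ s) : ⟪v, x⟫ = ⟪v, y⟫ := by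
  have := Submodule.inner_left_of_mem_orthogonal (s.vsub_mem_direction hx hy) hv
  rw [vsub_eq_sub, inner_sub_right] at this
  linarith

lemma mem_orthogonal_direction_affineSpan {A : Set (Euc d)} {v : Euc d} {α : ℝ}
    (h : ∀ x ∈ A, ⟪v, x⟫ = α) : v ∈ (affineSpan ℝ A).directionᗮ := by
  have hle : (affineSpan ℝ A).direction ≤ (ℝ ∙ v)ᗮ := by
    rw [direction_affineSpan, vectorSpan_def, Submodule.span_le]
    rintro _ ⟨x, hx, y, hy, rfl⟩
    rw [SetLike.mem_coe, Submodule.mem_orthogonal_singleton_iff_inner_right]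
    simp only [vsub_eq_sub, inner_sub_right, h x hx, h y hy, sub_self]
  exact fun z hz => real_inner_comm v z ▸
    Submodule.mem_orthogonal_singleton_iff_inner_right.1 (hle hz)

lemma inner_eq_of_mem_affineSpan {A : Set (Euc d)} {v x : Euc d} {α : ℝ}
    (h : ∀ y ∈ A, ⟪v, y⟫ = α) (hx : x ∈ affineSpan ℝ A) : ⟪v, x⟫ = α := by
  obtain ⟨a, ha⟩ := (affineSpan_nonempty ℝ).1 ⟨x, hx⟩
  exact (AffineSubspace.inner_eq_of_mem_orthogonal_direction
    (mem_orthogonal_direction_affineSpan h) hx (subset_affineSpan ℝ A ha)).trans (h a ha)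

lemma sub_le_affDist {A B : Set (Euc d)} (hA : A.Nonempty) (hB : B.Nonempty) {v : Euc d}
    (hv : ‖v‖ ≤ 1) {α β : ℝ} (hα : ∀ x ∈ A, ⟪v, x⟫ = α) (hβ : ∀ y ∈ B, ⟪v, y⟫ = β) :
    α - β ≤ affDist A B := by
  obtain ⟨a, ha⟩ := hA
  obtain ⟨b, hb⟩ := hB
  refine le_csInf ⟨_, a, subset_affineSpan ℝ A ha, b, subset_affineSpan ℝ B hb, rfl⟩ ?_
  rintro _ ⟨x, hx, y, hy, rfl⟩
  calc α - β = ⟪v, x - y⟫ := by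
        rw [inner_sub_right, inner_eq_of_mem_affineSpan hα hx, inner_eq_of_mem_affineSpan hβ hy]
    _ ≤ ‖v‖ * ‖x - y‖ := real_inner_le_norm _ _
    _ ≤ dist x y := by rw [dist_eq_norm]; exact mul_le_of_le_one_left (norm_nonneg _) hv

lemma dirWidth_le_affDist_suppSet {K : Set (Euc d)} {u : Euc d} (hu : ‖u‖ ≤ 1)
    (h₁ : (suppSet K u).Nonempty) (h₂ : (suppSet K (-u)).Nonempty) :
    dirWidth K u ≤ affDist (suppSet K u) (suppSet K (-u)) := by
  rw [dirWidth, ← sub_neg_eq_add]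
  refine sub_le_affDist h₁ h₂ hu (fun x hx => hx.2) fun y hy => ?_
  rw [← hy.2, inner_neg_left, neg_neg]

lemma affDist_comm (A B : Set (Euc d)) : affDist A B = affDist B A := by
  unfold affDist
  congr 1
  ext r
  constructor <;> rintro ⟨x, hx, y, hy, rfl⟩ <;> exact ⟨y, hy, x, hx, dist_comm x y⟩


section InnerProductSpace

variable {E : Type*} [NormedAddCommGroup E] [InnerProductSpace ℝ E]

lemma Submodule.exists_mem_orthogonal_ne_zero_inner_eq_zero [FiniteDimensional ℝ E]
    {V : Submodule ℝ E} {u : E} (huV : u ∈ Vᗮ) (hu0 : u ≠ 0)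
    (hV : finrank ℝ V ≠ finrank ℝ E - 1) : ∃ w ∈ Vᗮ, w ≠ 0 ∧ ⟪u, w⟫ = 0 := by
  have hVtop : V ≠ ⊤ := by
    rintro rfl
    rw [Submodule.top_orthogonal_eq_bot, Submodule.mem_bot] at huV
    exact hu0 huV
  have := Submodule.finrank_lt hVtop
  have hlt : finrank ℝ ↥(V ⊔ ℝ ∙ u) < finrank ℝ E :=
    (Submodule.finrank_add_le_finrank_add_finrank _ _).trans_lt <| by
      have := finrank_span_le_card (R := ℝ) ({u} : Set E)
      simp only [Set.toFinset_singleton, Finset.card_singleton] at this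
      omega
  have hne : (V ⊔ ℝ ∙ u)ᗮ ≠ ⊥ := by
    rw [Ne, Submodule.orthogonal_eq_bot_iff]
    rintro htop
    rw [htop, finrank_top] at hlt
    exact hlt.false
  obtain ⟨w, hw, hw0⟩ := (Submodule.ne_bot_iff _).1 hne
  rw [← Submodule.inf_orthogonal] at hw
  exact ⟨w, hw.1, hw0, Submodule.mem_orthogonal_singleton_iff_inner_right.1 hw.2⟩

lemma exists_norm_eq_one_inner_lt {S : Submodule ℝ E} {s : Set E} {u w y : E} (hu : ‖u‖ = 1)
    (huS : u ∈ S) (hwS : w ∈ S) (hw0 : w ≠ 0) (huw : ⟪u, w⟫ = 0) (hy : 0 < ⟪u, y⟫)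
    (hs : s ∈ 𝓝 u) : ∃ v ∈ S, v ∈ s ∧ ‖v‖ = 1 ∧ ⟪v, y⟫ < ⟪u, y⟫ := by
  wlog hwy : ⟪w, y⟫ ≤ 0 generalizing w
  · exact this (neg_mem hwS) (neg_ne_zero.2 hw0) (by rw [inner_neg_right, huw, neg_zero])
      (by rw [inner_neg_left]; linarith)
  have hnorm : ∀ t : ℝ, t ≠ 0 → 1 < ‖u + t • w‖ := fun t ht => by
    have hsq : ‖u + t • w‖ ^ 2 = 1 + t ^ 2 * ‖w‖ ^ 2 := by
      rw [norm_add_sq_real, hu, real_inner_smul_right, huw, norm_smul, Real.norm_eq_abs, mul_pow,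
        sq_abs]
      ring
    have : 0 < t ^ 2 * ‖w‖ ^ 2 := by positivity
    nlinarith [norm_nonneg (u + t • w)]
  set γ : ℝ → E := fun t => ‖u + t • w‖⁻¹ • (u + t • w)
  have hγ : Tendsto γ (𝓝[>] 0) (𝓝 u) := by
    have : ContinuousAt γ 0 := by
      fun_prop (disch := simp [hu])
    simpa [γ, hu] using this.tendsto.mono_left nhdsWithin_le_nhds
  obtain ⟨t, hts, ht⟩ := ((hγ.eventually_mem hs).and self_mem_nhdsWithin).exists
  have ht0 : (1 : ℝ) < ‖u + t • w‖ := hnorm t (ne_of_gt ht)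
  refine ⟨γ t, S.smul_mem _ (S.add_mem huS (S.smul_mem _ hwS)), hts,
    norm_smul_inv_norm (by rintro h; rw [h, norm_zero] at ht0; linarith), ?_⟩
  calc ⟪γ t, y⟫ = ‖u + t • w‖⁻¹ * (⟪u, y⟫ + t * ⟪w, y⟫) := by
        simp only [γ, real_inner_smul_left, inner_add_left]
    _ ≤ ‖u + t • w‖⁻¹ * ⟪u, y⟫ := by
        gcongr
        nlinarith [show (0 : ℝ) < t from ht]
    _ < ⟪u, y⟫ := by
        rw [inv_mul_lt_iff₀ (by linarith)]
        nlinarith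

end InnerProductSpace

theorem affDim_suppSet_eq_of_affDist_eq_minWidth {P : Set (Euc d)} (hP : IsPolytope P)
    (hint : (interior P).Nonempty) {c : Euc d} (hc : ∀ x ∈ P, c + c - x ∈ P) {u : Euc d}
    (hu : ‖u‖ = 1) (hdist : affDist (suppSet P u) (suppSet P (-u)) = minWidth P) :
    affDim (suppSet P u) = d - 1 := by
  have hK : IsCompact P := by
    obtain ⟨V, rfl⟩ := hP
    exact V.finite_toSet.isCompact_convexHull ℝ
  have hne : P.Nonempty := hint.mono interior_subset
  have hmin : dirWidth P u = minWidth P :=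
    le_antisymm (hdist ▸ dirWidth_le_affDist_suppSet hu.le (hK.suppSet_nonempty hne u)
      (hK.suppSet_nonempty hne (-u))) (minWidth_le_dirWidth hK hne hu)
  obtain ⟨a, ha⟩ := hK.suppSet_nonempty hne u
  have huV : u ∈ (affineSpan ℝ (suppSet P u)).directionᗮ :=
    mem_orthogonal_direction_affineSpan fun x hx => hx.2
  by_contra hdim
  obtain ⟨w, hwV, hw0, huw⟩ := Submodule.exists_mem_orthogonal_ne_zero_inner_eq_zero huV
    (norm_ne_zero_iff.1 (hu ▸ one_ne_zero)) (by rwa [finrank_euclideanSpace_fin])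
  have hua : 0 < ⟪u, a - c⟫ := by
    have := dirWidth_pos hK hint hu
    rw [dirWidth_eq_of_symm hK hne hc, ← ha.2] at this
    rw [inner_sub_right]
    linarith
  obtain ⟨v, hvV, ⟨x, hxu, hxv⟩, hv, hlt⟩ := exists_norm_eq_one_inner_lt hu huV hwV hw0 huw hua
    (hP.eventually_suppSet_inter_nonempty hne u)
  have hxa : ⟪v, x⟫ = ⟪v, a⟫ := AffineSubspace.inner_eq_of_mem_orthogonal_direction hvV
    (subset_affineSpan ℝ _ hxu) (subset_affineSpan ℝ _ ha)
  have := minWidth_le_dirWidth hK hne hv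
  rw [← hmin, dirWidth_eq_of_symm hK hne hc, dirWidth_eq_of_symm hK hne hc, ← hxv.2, hxa,
    ← ha.2] at this
  rw [inner_sub_right, inner_sub_right] at hlt
  linarith

theorem gritzmann_klee_centrally_symmetric_general {d : ℕ} (P F₁ F₂ : Set (Euc d))
    (hP : IsPolytope P) (hint : (interior P).Nonempty)
    (hsym : ∃ c : Euc d, (fun x => c + c - x) '' P = P)
    (hanti : StrictlyAntipodal P F₁ F₂)
    (hdist : affDist F₁ F₂ = minWidth P) :
    affDim F₁ = d - 1 ∧ affDim F₂ = d - 1 := by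
  obtain ⟨c, hc⟩ := hsym
  have hc' : ∀ x ∈ P, c + c - x ∈ P := fun x hx => hc ▸ mem_image_of_mem _ hx
  obtain ⟨-, u, hu, rfl, rfl⟩ := hanti
  refine ⟨affDim_suppSet_eq_of_affDist_eq_minWidth hP hint hc' hu hdist, ?_⟩
  refine affDim_suppSet_eq_of_affDist_eq_minWidth hP hint hc' (u := -u) (by rwa [norm_neg]) ?_
  rwa [neg_neg, affDist_comm]

/-- If `P ⊆ ℝ^d` is a centrally symmetric polytope with nonempty interior and `F₁`,
`F₂` are strictly antipodal faces of `P` whose distance equals the minimum width of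
`P`, then both `F₁` and `F₂` have affine dimension `d - 1`, i.e., both are facets. -/
theorem gritzmann_klee_centrally_symmetric {d : ℕ} (P F₁ F₂ : Set (Euc d))
    (hP : IsPolytope P) (hint : (interior P).Nonempty)
    (hsym : ∃ c : Euc d, (fun x => c + c - x) '' P = P)
    (hF₁ : IsFaceOf P F₁) (hF₂ : IsFaceOf P F₂)
    (hanti : StrictlyAntipodal P F₁ F₂)
    (hdist : affDist F₁ F₂ = minWidth P) :
    affDim F₁ = d - 1 ∧ affDim F₂ = d - 1 :=
  gritzmann_klee_centrally_symmetric_general P F₁ F₂ hP hint hsym hanti hdist
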